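/- Let Σ be an M×M real symmetric positive definite matrix and let σ² ≥ 0. If L₁ and L₂ are M×M real symmetric positive semidefinite matrices satisfying L₁ᵀ Σ L₁ + σ²·I = L₂ᵀ Σ L₂ + σ²·I, then L₁ = L₂. (In particular, the topology matrix L in the model p = Lθ + w is uniquely identified, without scaling or permutation ambiguity, from the covariance matrix Σ_p = Lᵀ Σ_θ L + σ²I of the observations.) -/

import Mathlib

open Matrix

/-!
The `Lᵢ` are symmetric, so the hypothesis reads `L₁ S L₁ = L₂ S L₂`. With `R = √S` this says
`(R L₁ R)² = (R L₂ R)²`; both `R Lᵢ R` are positive semidefinite, so uniqueness of positive square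
roots gives `R L₁ R = R L₂ R`, and `R` is invertible because `S` is positive definite.
-/

section StrictlyPositiveConjugation

variable {A : Type*} [PartialOrder A] [Ring A] [StarRing A] [TopologicalSpace A]
  [StarOrderedRing A] [Algebra ℝ A] [ContinuousFunctionalCalculus ℝ A IsSelfAdjoint]
  [NonnegSpectrumClass ℝ A] [IsSemitopologicalRing A] [T2Space A]

theorem IsStrictlyPositive.eq_of_mul_mul_eq {s a b : A} (hs : IsStrictlyPositive s)
    (ha : 0 ≤ a) (hb : 0 ≤ b) (h : a * s * a = b * s * b) : a = b := by
  set r := CFC.sqrt s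
  have hr : IsUnit r := hs.isUnit_cfcSqrt
  have hrr : r * r = s := CFC.sqrt_mul_sqrt_self s hs.nonneg
  have hsq (c : A) : (r * c * r) ^ 2 = r * (c * s * c) * r := by
    rw [pow_two, ← hrr]; noncomm_ring
  have hconj : r * a * r = r * b * r :=
    (CFC.sq_eq_sq_iff _ _ (conjugate_nonneg_of_nonneg ha (CFC.sqrt_nonneg s))
      (conjugate_nonneg_of_nonneg hb (CFC.sqrt_nonneg s))).mp (by rw [hsq, hsq, h])
  exact hr.mul_left_cancel (hr.mul_right_cancel hconj)

end StrictlyPositiveConjugation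

theorem laplacian_identifiable_from_covariance_general {M : ℕ}
    (S : Matrix (Fin M) (Fin M) ℝ) (hS : S.PosDef)
    (σ2 : ℝ)
    (L₁ L₂ : Matrix (Fin M) (Fin M) ℝ)
    (hL₁ : L₁.PosSemidef) (hL₂ : L₂.PosSemidef)
    (heq : L₁ᵀ * S * L₁ + σ2 • (1 : Matrix (Fin M) (Fin M) ℝ) =
           L₂ᵀ * S * L₂ + σ2 • (1 : Matrix (Fin M) (Fin M) ℝ)) :
    L₁ = L₂ := by
  have h := add_right_cancel heq
  rw [(isHermitian_iff_isSymm.mp hL₁.isHermitian).eq,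
    (isHermitian_iff_isSymm.mp hL₂.isHermitian).eq] at h
  open scoped MatrixOrder in
  exact hS.isStrictlyPositive.eq_of_mul_mul_eq hL₁.nonneg hL₂.nonneg h

/-- **Identifiability of the Laplacian mixing matrix (Theorem 1).**
If `S` is a symmetric positive definite `M × M` matrix, `σ² ≥ 0`, and `L₁, L₂` are
symmetric positive semidefinite matrices with `L₁ᵀ S L₁ + σ² I = L₂ᵀ S L₂ + σ² I`,
then `L₁ = L₂`. -/
theorem laplacian_identifiable_from_covariance {M : ℕ}
    (S : Matrix (Fin M) (Fin M) ℝ) (hS : S.PosDef)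
    (σ2 : ℝ) (hσ2 : 0 ≤ σ2)
    (L₁ L₂ : Matrix (Fin M) (Fin M) ℝ)
    (hL₁ : L₁.PosSemidef) (hL₂ : L₂.PosSemidef)
    (heq : L₁ᵀ * S * L₁ + σ2 • (1 : Matrix (Fin M) (Fin M) ℝ) =
           L₂ᵀ * S * L₂ + σ2 • (1 : Matrix (Fin M) (Fin M) ℝ)) :
    L₁ = L₂ :=
  laplacian_identifiable_from_covariance_general S hS σ2 L₁ L₂ hL₁ hL₂ heq
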